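/- arXiv:1910.05542 — 3 statements merged into one kernel-verified Lean document; each statement's English description precedes it below -/
import Mathlib

section
/- Let $D$ be a bipartite digraph with partite sets $V_1$ and $V_2$, and let $C_i$ and $C_j$ be two vertex-disjoint directed cycles in $D$ that cannot be merged into a cycle with vertex set $V(C_i) \cup V(C_j)$. If $\overleftrightarrow{a}(V(C_i), V(C_j)) = \frac{|V(C_i)| \cdot |V(C_j)|}{2}$, then for any $q \in \{1,2\}$ and any $x_i \in V(C_i) \cap V_q$, $x_j \in V(C_j) \cap V_q$, exactly one of the arcs $x_i x_j^+$ and $x_j x_i^+$ belongs to $A(D)$. -/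
/-!
Call `(y₁, y₂) ∈ C₁ × C₂` balanced when `y₁` and `y₂` lie in the same partite set. The
successor map of `C₂` permutes `V(C₂)` and switches sides, so exactly half of the `|C₁| |C₂|`
pairs are balanced. Pulling the head of an arc back along its cycle, the arcs `y₁ → z` with
`z ∈ C₂` correspond to the balanced pairs `(y₁, y₂)` with `y₁ → y₂⁺`, and the arcs `y₂ → z` with
`z ∈ C₁` to those with `y₂ → y₁⁺`. No balanced pair has both, for then
`y₂⁺ ⋯ y₂ y₁⁺ ⋯ y₁` would merge the two cycles. So the arcs between the cycles are at most as
many as the balanced pairs, and equality forces each balanced pair to carry exactly one arc.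
-/

open Finset

variable {V : Type*}

/-- Cyclic successor of `x` on the cycle represented by list `c`. -/
def cycNext [DecidableEq V] (c : List V) (x : V) : V :=
  c.getD ((c.idxOf x + 1) % c.length) x

/-- `c` is a directed cycle of the digraph with arc relation `A`. -/
def IsDicycle [DecidableEq V] (A : V → V → Prop) (c : List V) : Prop :=
  2 ≤ c.length ∧ c.Nodup ∧ ∀ x ∈ c, A x (cycNext c x)

/-- The digraph has a hamiltonian (directed) cycle. -/
def IsHamiltonian [DecidableEq V] (A : V → V → Prop) : Prop :=
  ∃ c : List V, IsDicycle A c ∧ ∀ v, v ∈ c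

/-- `p` is a hamiltonian directed path. -/
def IsHamDipath (A : V → V → Prop) (p : List V) : Prop :=
  p.Nodup ∧ p.Chain' A ∧ ∀ v, v ∈ p

/-- The digraph has a hamiltonian directed path. -/
def IsTraceable (A : V → V → Prop) : Prop := ∃ p, IsHamDipath A p

/-- The digraph has a cycle factor: vertex-disjoint dicycles covering all vertices. -/
def HasCycleFactor [DecidableEq V] (A : V → V → Prop) : Prop :=
  ∃ L : List (List V), (∀ c ∈ L, IsDicycle A c) ∧
    L.Pairwise (fun c d => ∀ x ∈ c, x ∉ d) ∧ ∀ v, ∃ c ∈ L, v ∈ c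

/-- `V₁, V₂` form a bipartition of the digraph into independent sets. -/
def IsBipartition [DecidableEq V] [Fintype V] (A : V → V → Prop) (V₁ V₂ : Finset V) : Prop :=
  Disjoint V₁ V₂ ∧ V₁ ∪ V₂ = Finset.univ ∧
    (∀ x ∈ V₁, ∀ y ∈ V₁, ¬ A x y) ∧ (∀ x ∈ V₂, ∀ y ∈ V₂, ¬ A x y)

/-- total degree (out-degree plus in-degree) of `v`. -/
def deg [Fintype V] (A : V → V → Prop) [DecidableRel A] (v : V) : ℕ :=
  (Finset.univ.filter (fun y => A v y)).card + (Finset.univ.filter (fun y => A y v)).card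

/-- number of arcs (in both directions) between `v` and the set `X`. -/
def degIn (A : V → V → Prop) [DecidableRel A] (X : Finset V) (v : V) : ℕ :=
  (X.filter (fun y => A v y)).card + (X.filter (fun y => A y v)).card

/-- total number of arcs between `X` and `Y`, in both directions. -/
def arcsBetween (A : V → V → Prop) [DecidableRel A] (X Y : Finset V) : ℕ :=
  ((X ×ˢ Y).filter (fun p => A p.1 p.2)).card + ((Y ×ˢ X).filter (fun p => A p.1 p.2)).card

/-- strong connectivity. -/
def IsStrong (A : V → V → Prop) : Prop := ∀ u v, Relation.ReflTransGen A u v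

/-- `N⁺(S)`: out-neighbourhood of a set. -/
def outNbrs [Fintype V] [DecidableEq V] (A : V → V → Prop) [DecidableRel A]
    (S : Finset V) : Finset V :=
  Finset.univ.filter (fun y => ∃ v ∈ S, A v y)

/-- a perfect matching from `X` to `Y` using arcs of the digraph. -/
def HasPerfectMatching (A : V → V → Prop) (X Y : Finset V) : Prop :=
  ∃ f : V → V, Set.InjOn f X ∧ ∀ x ∈ X, f x ∈ Y ∧ A x (f x)

/-- a matching from `V₁` to `V₂`: a set of pairwise independent arcs. -/
def IsMatching (A : V → V → Prop) (V₁ V₂ : Finset V) (M : Finset (V × V)) : Prop :=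
  (∀ p ∈ M, p.1 ∈ V₁ ∧ p.2 ∈ V₂ ∧ A p.1 p.2) ∧
  (∀ p ∈ M, ∀ q ∈ M, p ≠ q → p.1 ≠ q.1 ∧ p.2 ≠ q.2)

/-- the digraph (with arc relation `A`) is a member of the family `𝓗₁`,
with partite sets `S ∪ R` and `U ∪ W`. -/
def IsH1 [DecidableEq V] [Fintype V] (A : V → V → Prop) [DecidableRel A] (a : ℕ)
    (S R U W : Finset V) : Prop :=
  Odd a ∧ 3 ≤ a ∧
  Disjoint S R ∧ Disjoint U W ∧ Disjoint (S ∪ R) (U ∪ W) ∧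
  S ∪ R ∪ U ∪ W = Finset.univ ∧
  S.card = (a + 1) / 2 ∧ W.card = (a + 1) / 2 ∧
  U.card = (a - 1) / 2 ∧ R.card = (a - 1) / 2 ∧
  (∀ x ∈ S ∪ R, ∀ y ∈ S ∪ R, ¬ A x y) ∧
  (∀ x ∈ U ∪ W, ∀ y ∈ U ∪ W, ¬ A x y) ∧
  (∀ r ∈ R, ∀ w ∈ W, A r w ∧ A w r) ∧
  (∀ u ∈ U, ∀ s ∈ S, A u s ∧ A s u) ∧
  (∀ w ∈ W, ∀ s ∈ S, A w s) ∧
  (∀ s ∈ S, ∀ w ∈ W, ¬ A s w) ∧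
  (∃ u ∈ U, ∃ r ∈ R, A u r) ∧
  (∀ r ∈ R, (a - 3) / 2 ≤ degIn A U r) ∧
  (∀ u ∈ U, (a - 3) / 2 ≤ degIn A R u)

/-- the digraph (with arc relation `A`) is the digraph `H₃`,
with partite sets `S ∪ R` and `U ∪ W`. -/
def IsH3 [DecidableEq V] [Fintype V] (A : V → V → Prop) [DecidableRel A] (a : ℕ)
    (S R U W : Finset V) : Prop :=
  Even a ∧ 4 ≤ a ∧
  Disjoint S R ∧ Disjoint U W ∧ Disjoint (S ∪ R) (U ∪ W) ∧
  S ∪ R ∪ U ∪ W = Finset.univ ∧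
  S.card = (a + 2) / 2 ∧ W.card = (a + 2) / 2 ∧
  U.card = (a - 2) / 2 ∧ R.card = (a - 2) / 2 ∧
  (∀ x ∈ S ∪ R, ∀ y ∈ S ∪ R, ¬ A x y) ∧
  (∀ x ∈ U ∪ W, ∀ y ∈ U ∪ W, ¬ A x y) ∧
  (∀ r ∈ R, ∀ y ∈ U ∪ W, A r y ∧ A y r) ∧
  (∀ u ∈ U, ∀ x ∈ S ∪ R, A u x ∧ A x u) ∧
  (∀ w ∈ W, ∀ s ∈ S, A w s) ∧
  (∀ s ∈ S, ∀ w ∈ W, ¬ A s w)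

/-- the digraph `H₂` on vertices `Fin 6`, where
`x₁ = 0, x₂ = 1, x₃ = 2, y₁ = 3, y₂ = 4, y₃ = 5`. -/
def H2Adj : Fin 6 → Fin 6 → Prop := fun u v =>
  (u, v) ∈ ([(0,4),(4,2),(2,5),(5,0),(1,4),(4,1),(1,5),(5,1),(3,0),(0,3),(3,2),(2,3)] :
    List (Fin 6 × Fin 6))

instance : DecidableRel H2Adj := fun u v => by unfold H2Adj; infer_instance

section CyclicSuccessor

variable [DecidableEq V] {l : List V} {x : V}

lemma cycNext_eq_next (hx : x ∈ l) : cycNext l x = l.next x hx := by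
  rw [cycNext, List.next_eq_getElem hx, List.getD_eq_getElem]

lemma cycNext_mem (hx : x ∈ l) : cycNext l x ∈ l := by
  rw [cycNext_eq_next hx]
  exact List.next_mem l x hx

lemma cycNext_getElem (hl : l.Nodup) (i : ℕ) (hi : i < l.length) :
    cycNext l l[i] = l[(i + 1) % l.length]'(Nat.mod_lt _ (by omega)) := by
  rw [cycNext_eq_next (List.getElem_mem hi), List.next_getElem l hl i hi]

lemma cycNext_bijOn (hl : l.Nodup) : Set.BijOn (cycNext l) l.toFinset l.toFinset := by
  simp only [List.coe_toFinset]
  refine ⟨fun x hx => cycNext_mem hx, fun x hx y hy hxy => ?_, fun y hy => ?_⟩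
  · rw [← List.prev_next l hl x hx, ← List.prev_next l hl y hy]
    simp_rw [← cycNext_eq_next, hxy]
  · exact ⟨l.prev y hy, List.prev_mem l y hy,
      by rw [cycNext_eq_next (List.prev_mem l y hy), List.next_prev l hl]⟩

lemma cycNext_rotate (hl : l.Nodup) (n : ℕ) (hx : x ∈ l) :
    cycNext (l.rotate n) x = cycNext l x := by
  rw [cycNext_eq_next hx, cycNext_eq_next (List.mem_rotate.mpr hx),
    List.isRotated_next_eq (List.IsRotated.forall l n).symm hl hx]

lemma head?_rotate_idxOf_succ (hx : x ∈ l) :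
    (l.rotate (l.idxOf x + 1)).head? = some (cycNext l x) := by
  have hl : 0 < l.length := List.length_pos_of_mem hx
  rw [← List.rotate_mod, List.head?_rotate (Nat.mod_lt _ hl), cycNext,
    List.getD_eq_getElem _ _ (Nat.mod_lt _ hl), List.getElem?_eq_getElem]

lemma getLast?_rotate_idxOf_succ (hx : x ∈ l) :
    (l.rotate (l.idxOf x + 1)).getLast? = some x := by
  have hi : l.idxOf x < l.length := List.idxOf_lt_length_iff.mpr hx
  rw [List.getLast?_eq_getElem?, List.length_rotate, List.getElem?_rotate (by omega),
    show l.length - 1 + (l.idxOf x + 1) = l.idxOf x + l.length by omega, Nat.add_mod_right,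
    Nat.mod_eq_of_lt hi, List.getElem?_idxOf hx]

lemma cycNext_snd_bijOn {α : Type*} (hl : l.Nodup) (X : Finset α) :
    Set.BijOn (fun p : α × V => (p.1, cycNext l p.2)) (X ×ˢ l.toFinset : Finset _)
      (X ×ˢ l.toFinset : Finset _) := by
  rw [coe_product]
  exact (Set.bijOn_id _).prodMap (cycNext_bijOn hl)

end CyclicSuccessor

section Dicycle

variable [DecidableEq V] {A : V → V → Prop} {c c₁ c₂ : List V}

lemma IsDicycle.rotate (h : IsDicycle A c) (n : ℕ) : IsDicycle A (c.rotate n) := by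
  refine ⟨by simpa using h.1, List.nodup_rotate.mpr h.2.1, fun x hx => ?_⟩
  rw [List.mem_rotate] at hx
  rw [cycNext_rotate h.2.1 n hx]
  exact h.2.2 x hx

lemma IsDicycle.isChain (h : IsDicycle A c) : c.IsChain A := by
  rw [List.isChain_iff_getElem]
  intro i hi
  have := h.2.2 _ (List.getElem_mem (by omega : i < c.length))
  rw [cycNext_getElem h.2.1] at this
  simpa only [Nat.mod_eq_of_lt hi] using this

lemma isDicycle_of_isChain (hlen : 2 ≤ c.length) (hc : c.Nodup) (hchain : c.IsChain A)
    (hwrap : ∀ a ∈ c.getLast?, ∀ b ∈ c.head?, A a b) : IsDicycle A c := by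
  refine ⟨hlen, hc, fun x hx => ?_⟩
  obtain ⟨i, hi, rfl⟩ := List.getElem_of_mem hx
  rw [cycNext_getElem hc]
  rcases Nat.lt_or_ge (i + 1) c.length with hlt | hge
  · simp_rw [Nat.mod_eq_of_lt hlt]
    exact List.isChain_iff_getElem.mp hchain i hlt
  · obtain rfl : i = c.length - 1 := by omega
    simp_rw [Nat.sub_add_cancel (by omega : 1 ≤ c.length), Nat.mod_self]
    exact hwrap _ (by simp [List.getLast?_eq_getElem?]) _ (by simp [List.head?_eq_getElem?])

lemma IsDicycle.append_rotate (h₁ : IsDicycle A c₁) (h₂ : IsDicycle A c₂)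
    (hdisj : ∀ x ∈ c₁, x ∉ c₂) {x₁ x₂ : V} (hx₁ : x₁ ∈ c₁) (hx₂ : x₂ ∈ c₂)
    (h₁₂ : A x₁ (cycNext c₂ x₂)) (h₂₁ : A x₂ (cycNext c₁ x₁)) :
    IsDicycle A (c₂.rotate (c₂.idxOf x₂ + 1) ++ c₁.rotate (c₁.idxOf x₁ + 1)) := by
  have hlen := h₁.1
  refine isDicycle_of_isChain ?_ ?_ ?_ ?_
  · simp only [List.length_append, List.length_rotate]
    omega
  · exact List.nodup_append.mpr ⟨List.nodup_rotate.mpr h₂.2.1, List.nodup_rotate.mpr h₁.2.1,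
      fun a ha b hb hab => hdisj b (List.mem_rotate.mp hb) (hab ▸ List.mem_rotate.mp ha)⟩
  · refine List.isChain_append.mpr ⟨(h₂.rotate _).isChain, (h₁.rotate _).isChain, ?_⟩
    simpa [getLast?_rotate_idxOf_succ hx₂, head?_rotate_idxOf_succ hx₁] using h₂₁
  · simpa [List.getLast?_append, List.head?_append, getLast?_rotate_idxOf_succ hx₁,
      head?_rotate_idxOf_succ hx₂] using h₁₂

end Dicycle

lemma Set.BijOn.card_filter_comp {α β : Type*} {s : Finset α} {t : Finset β} {f : α → β}
    (hf : Set.BijOn f s t) (P : β → Prop) [DecidablePred P] :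
    #(s.filter (fun a => P (f a))) = #(t.filter P) := by
  refine Set.BijOn.finsetCard_eq f ⟨fun a ha => ?_, hf.injOn.mono fun a ha => ?_, fun b hb => ?_⟩
  · simp only [coe_filter, Set.mem_ofPred_eq] at ha ⊢
    exact ⟨hf.mapsTo ha.1, ha.2⟩
  · exact (mem_filter.mp ha).1
  · simp only [coe_filter, Set.mem_ofPred_eq] at hb
    obtain ⟨a, ha, rfl⟩ := hf.surjOn hb.1
    exact ⟨a, by simpa using ⟨ha, hb.2⟩, rfl⟩

lemma arcsBetween_toFinset_eq [DecidableEq V] (A : V → V → Prop) [DecidableRel A]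
    {c₁ c₂ : List V} (h₁ : c₁.Nodup) (h₂ : c₂.Nodup) :
    arcsBetween A c₁.toFinset c₂.toFinset =
      #((c₁.toFinset ×ˢ c₂.toFinset).filter fun p => A p.1 (cycNext c₂ p.2)) +
      #((c₁.toFinset ×ˢ c₂.toFinset).filter fun p => A p.2 (cycNext c₁ p.1)) := by
  have hswap : Set.BijOn (Prod.swap : V × V → V × V)
      (c₁.toFinset ×ˢ c₂.toFinset : Finset (V × V)) (c₂.toFinset ×ˢ c₁.toFinset : Finset _) := by
    rw [coe_product, coe_product]
    exact ⟨Set.mapsTo_swap_prod _ _, Prod.swap_injective.injOn, (Set.image_swap_prod _ _).ge⟩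
  rw [arcsBetween, ← (cycNext_snd_bijOn h₂ _).card_filter_comp,
    ← ((cycNext_snd_bijOn h₁ _).comp hswap).card_filter_comp]
  rfl

section Bipartite

variable [DecidableEq V] [Fintype V] {A : V → V → Prop} {V₁ V₂ : Finset V}

lemma IsBipartition.mem_iff_notMem_of_adj (hb : IsBipartition A V₁ V₂) {u v : V} (h : A u v) :
    u ∈ V₁ ↔ v ∉ V₁ := by
  obtain ⟨-, huniv, h₁, h₂⟩ := hb
  have hmem : ∀ w, w ∉ V₁ → w ∈ V₂ := fun w hw => by
    simpa [hw] using huniv.ge (mem_univ w)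
  exact ⟨fun hu hv => h₁ u hu v hv h,
    fun hv => by_contra fun hu => h₂ u (hmem u hu) v (hmem v hv) h⟩

lemma IsBipartition.mem_iff_mem_of_mem_part (hb : IsBipartition A V₁ V₂) {q : Finset V}
    (hq : q = V₁ ∨ q = V₂) {u v : V} (hu : u ∈ q) (hv : v ∈ q) : u ∈ V₁ ↔ v ∈ V₁ := by
  rcases hq with rfl | rfl
  · exact iff_of_true hu hv
  · exact iff_of_false (disjoint_right.mp hb.1 hu) (disjoint_right.mp hb.1 hv)

lemma IsBipartition.mem_iff_cycNext_notMem (hb : IsBipartition A V₁ V₂) {c : List V}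
    (hc : IsDicycle A c) {y : V} (hy : y ∈ c) : y ∈ V₁ ↔ cycNext c y ∉ V₁ :=
  hb.mem_iff_notMem_of_adj (hc.2.2 y hy)

lemma IsBipartition.mem_iff_mem_of_adj_cycNext (hb : IsBipartition A V₁ V₂) {c : List V}
    (hc : IsDicycle A c) {x y : V} (hy : y ∈ c) (h : A x (cycNext c y)) : x ∈ V₁ ↔ y ∈ V₁ := by
  have := hb.mem_iff_cycNext_notMem hc hy
  have := hb.mem_iff_notMem_of_adj h
  tauto

lemma IsBipartition.two_mul_card_filter_mem_iff_mem (hb : IsBipartition A V₁ V₂) {c : List V}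
    (hc : IsDicycle A c) (X : Finset V) :
    2 * #((X ×ˢ c.toFinset).filter fun p => p.1 ∈ V₁ ↔ p.2 ∈ V₁) = #X * c.length := by
  have hflip : #((X ×ˢ c.toFinset).filter fun p => ¬(p.1 ∈ V₁ ↔ p.2 ∈ V₁)) =
      #((X ×ˢ c.toFinset).filter fun p => p.1 ∈ V₁ ↔ p.2 ∈ V₁) := by
    rw [← (cycNext_snd_bijOn hc.2.1 X).card_filter_comp]
    refine congrArg card (filter_congr fun p hp => ?_)
    have := hb.mem_iff_cycNext_notMem hc (List.mem_toFinset.mp (mem_product.mp hp).2)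
    tauto
  have hsplit := card_filter_add_card_filter_not (s := X ×ˢ c.toFinset)
    (fun p => p.1 ∈ V₁ ↔ p.2 ∈ V₁)
  rw [hflip, card_product, List.toFinset_card_of_nodup hc.2.1] at hsplit
  omega

lemma IsBipartition.xor_of_two_mul_arcsBetween_eq [DecidableRel A] (hb : IsBipartition A V₁ V₂)
    {c₁ c₂ : List V} (h₁ : IsDicycle A c₁) (h₂ : IsDicycle A c₂)
    (hnot : ∀ y₁ ∈ c₁, ∀ y₂ ∈ c₂, ¬(A y₁ (cycNext c₂ y₂) ∧ A y₂ (cycNext c₁ y₁)))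
    (heq : 2 * arcsBetween A c₁.toFinset c₂.toFinset = c₁.length * c₂.length)
    {x₁ x₂ : V} (hx₁ : x₁ ∈ c₁) (hx₂ : x₂ ∈ c₂) (hside : x₁ ∈ V₁ ↔ x₂ ∈ V₁) :
    Xor' (A x₁ (cycNext c₂ x₂)) (A x₂ (cycNext c₁ x₁)) := by
  rw [arcsBetween_toFinset_eq A h₁.2.1 h₂.2.1] at heq
  set S := c₁.toFinset ×ˢ c₂.toFinset
  set P := S.filter fun p => p.1 ∈ V₁ ↔ p.2 ∈ V₁
  set X := S.filter fun p => A p.1 (cycNext c₂ p.2)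
  set Y := S.filter fun p => A p.2 (cycNext c₁ p.1)
  have hmem : ∀ {p}, p ∈ S → p.1 ∈ c₁ ∧ p.2 ∈ c₂ := fun hp => by
    simpa only [S, mem_product, List.mem_toFinset] using hp
  have hXY : Disjoint X Y :=
    disjoint_filter.mpr fun p hp hX hY => hnot _ (hmem hp).1 _ (hmem hp).2 ⟨hX, hY⟩
  have hXP : X ⊆ P := fun p hp => by
    obtain ⟨hp, hX⟩ := mem_filter.mp hp
    exact mem_filter.mpr ⟨hp, hb.mem_iff_mem_of_adj_cycNext h₂ (hmem hp).2 hX⟩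
  have hYP : Y ⊆ P := fun p hp => by
    obtain ⟨hp, hY⟩ := mem_filter.mp hp
    exact mem_filter.mpr ⟨hp, (hb.mem_iff_mem_of_adj_cycNext h₁ (hmem hp).1 hY).symm⟩
  have hP : 2 * #P = c₁.length * c₂.length := by
    rw [hb.two_mul_card_filter_mem_iff_mem h₂, List.toFinset_card_of_nodup h₁.2.1]
  have hXYP : X ∪ Y = P := by
    refine eq_of_subset_of_card_le (union_subset hXP hYP) ?_
    rw [card_union_of_disjoint hXY]
    omega
  have hx : (x₁, x₂) ∈ X ∪ Y := by
    rw [hXYP]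
    exact mem_filter.mpr
      ⟨mem_product.mpr ⟨List.mem_toFinset.mpr hx₁, List.mem_toFinset.mpr hx₂⟩, hside⟩
  rcases mem_union.mp hx with hX | hY
  · exact Or.inl ⟨(mem_filter.mp hX).2, fun h => hnot _ hx₁ _ hx₂ ⟨(mem_filter.mp hX).2, h⟩⟩
  · exact Or.inr ⟨(mem_filter.mp hY).2, fun h => hnot _ hx₁ _ hx₂ ⟨h, (mem_filter.mp hY).2⟩⟩

end Bipartite

theorem stmt4 {V : Type*} [DecidableEq V] [Fintype V] (A : V → V → Prop) [DecidableRel A]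
    (V₁ V₂ : Finset V) (hbip : IsBipartition A V₁ V₂)
    (c₁ c₂ : List V) (h₁ : IsDicycle A c₁) (h₂ : IsDicycle A c₂)
    (hdisj : ∀ x ∈ c₁, x ∉ c₂)
    (hnomerge : ¬ ∃ c : List V, IsDicycle A c ∧ ∀ v, v ∈ c ↔ v ∈ c₁ ∨ v ∈ c₂)
    (heq : 2 * arcsBetween A c₁.toFinset c₂.toFinset = c₁.length * c₂.length)
    (q : Finset V) (hq : q = V₁ ∨ q = V₂)
    (x₁ x₂ : V) (hx₁ : x₁ ∈ c₁) (hx₁q : x₁ ∈ q) (hx₂ : x₂ ∈ c₂) (hx₂q : x₂ ∈ q) :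
    Xor' (A x₁ (cycNext c₂ x₂)) (A x₂ (cycNext c₁ x₁)) := by
  refine hbip.xor_of_two_mul_arcsBetween_eq h₁ h₂ ?_ heq hx₁ hx₂
    (hbip.mem_iff_mem_of_mem_part hq hx₁q hx₂q)
  rintro y₁ hy₁ y₂ hy₂ ⟨h₁₂, h₂₁⟩
  refine hnomerge ⟨_, h₁.append_rotate h₂ hdisj hy₁ hy₂ h₁₂ h₂₁, fun v => ?_⟩
  simp only [List.mem_append, List.mem_rotate, or_comm]
end

section
/- Let $D$ be a strong balanced bipartite digraph of order $2a$, $a \ge 2$, satisfying $d(u)+d(v) \ge 3a-1$ for all pairs of non-adjacent vertices $u,v$. Then either $D$ contains a cycle factor, or $a$ is odd and $D$ is isomorphic to a digraph in the family $\mathcal{H}_1$. -/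
open Finset

variable {V : Type*}

/-
By Hall's theorem, either every set of vertices has at least as many out-neighbours as elements,
and then a bijective successor map along arcs exists, whose cycles form a cycle factor; or some
`S`, which may be taken inside one partite set `V₁`, has `|N⁺(S)| < |S|`. Put `T = N⁺(S)`,
`W = V₂ \ T` and `R = V₁ \ S`. Vertices of `S` have degree at most `|T| + a`, vertices of `W`
at most `a + |R|`, and strong connectivity makes `T` and `R` nonempty. The degree condition on
two vertices of `S` and on two vertices of `W` gives `a ≤ 2|T| + 1` and `2|S| ≤ a + 1`, hence
`a = 2|T| + 1 = 2|S| - 1`. Then all these degree bounds are attained, which forces every arc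
prescribed in `𝓗₁`; the degree condition on pairs `(r, s)` and `(u, w)` bounds the arcs between
`U = T` and `R`, and strong connectivity yields an arc from `T` to `R`.
-/

theorem cycNext_eq_next_s7 [DecidableEq V] {c : List V} {x : V} (hx : x ∈ c) :
    cycNext c x = c.next x hx := by
  rw [List.next_eq_getElem, cycNext, List.getD_eq_getElem]

section CycleFactor

variable [DecidableEq V] [Fintype V] {A : V → V → Prop}

theorem Equiv.Perm.isDicycle_toList {σ : Equiv.Perm V} (hσ : ∀ v, A v (σ v)) {x : V}
    (hx : x ∈ σ.support) : IsDicycle A (σ.toList x) :=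
  ⟨Equiv.Perm.two_le_length_toList_iff_mem_support.mpr hx, σ.nodup_toList x, fun y hy => by
    rw [cycNext_eq_next_s7 hy, σ.next_toList_eq_apply x y hy]; exact hσ y⟩

theorem hasCycleFactor_of_perm (σ : Equiv.Perm V) (hσ : ∀ v, A v (σ v))
    (hfix : ∀ v, σ v ≠ v) : HasCycleFactor A := by
  classical
  -- one cycle of `σ` per class of `SameCycle`, read off from a representative
  let Q := Quotient (Equiv.Perm.SameCycle.setoid σ)
  have hsupp : ∀ v, v ∈ σ.support := fun v => Equiv.Perm.mem_support.mpr (hfix v)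
  have hmem : ∀ (q : Q) v, v ∈ σ.toList q.out ↔ q = ⟦v⟧ := fun q v => by
    rw [Equiv.Perm.mem_toList_iff, and_iff_left (hsupp _), Quotient.eq_mk_iff_out]
    rfl
  refine ⟨(Finset.univ : Finset Q).toList.map (fun q => σ.toList q.out), ?_, ?_, fun v => ?_⟩
  · simp only [List.mem_map]
    rintro _ ⟨q, -, rfl⟩
    exact Equiv.Perm.isDicycle_toList hσ (hsupp _)
  · refine List.Pairwise.map _ (fun q q' hne x hx hx' => hne ?_) (Finset.nodup_toList _)
    rw [(hmem q x).mp hx, (hmem q' x).mp hx']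
  · exact ⟨σ.toList (⟦v⟧ : Q).out, List.mem_map.mpr ⟨_, mem_toList.mpr (mem_univ _), rfl⟩,
      (hmem _ v).mpr rfl⟩

end CycleFactor

section Degrees

variable {A : V → V → Prop} [DecidableRel A]

theorem degIn_union [DecidableEq V] {v : V} {X Y : Finset V} (hXY : Disjoint X Y) :
    degIn A (X ∪ Y) v = degIn A X v + degIn A Y v := by
  simp only [degIn, filter_union, card_union_of_disjoint (disjoint_filter_filter hXY)]
  omega

theorem degIn_eq_two_mul_card {v : V} {Y : Finset V} (h : ∀ y ∈ Y, A v y ∧ A y v) :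
    degIn A Y v = 2 * Y.card := by
  rw [degIn, filter_true_of_mem fun y hy => (h y hy).1, filter_true_of_mem fun y hy => (h y hy).2]
  omega

variable [Fintype V]

def outNbhd (A : V → V → Prop) [DecidableRel A] (v : V) : Finset V := univ.filter (A v ·)

def inNbhd (A : V → V → Prop) [DecidableRel A] (v : V) : Finset V := univ.filter (A · v)

@[simp] theorem mem_outNbhd {v y : V} : y ∈ outNbhd A v ↔ A v y := by simp [outNbhd]

@[simp] theorem mem_inNbhd {v y : V} : y ∈ inNbhd A v ↔ A y v := by simp [inNbhd]

theorem deg_eq_card_outNbhd_add_card_inNbhd (v : V) :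
    deg A v = (outNbhd A v).card + (inNbhd A v).card := rfl

theorem deg_le_of_subset {v : V} {X Y : Finset V} (hX : outNbhd A v ⊆ X)
    (hY : inNbhd A v ⊆ Y) : deg A v ≤ X.card + Y.card :=
  add_le_add (card_le_card hX) (card_le_card hY)

theorem outNbhd_eq_and_inNbhd_eq_of_le_deg {v : V} {X Y : Finset V} (hX : outNbhd A v ⊆ X)
    (hY : inNbhd A v ⊆ Y) (h : X.card + Y.card ≤ deg A v) :
    outNbhd A v = X ∧ inNbhd A v = Y := by
  have hX' := card_le_card hX
  have hY' := card_le_card hY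
  rw [deg_eq_card_outNbhd_add_card_inNbhd] at h
  exact ⟨eq_of_subset_of_card_le hX (by omega), eq_of_subset_of_card_le hY (by omega)⟩

theorem deg_eq_degIn {v : V} {X : Finset V} (h : ∀ y, A v y ∨ A y v → y ∈ X) :
    deg A v = degIn A X v := by
  unfold deg degIn
  congr 2 <;> ext y <;> simp only [mem_filter, mem_univ, true_and] <;> grind

variable {m : ℕ} {X O I : Finset V}

theorem le_two_mul_card_add_card
    (hdeg : ∀ u v, u ≠ v → ¬ A u v → ¬ A v u → m ≤ deg A u + deg A v)
    (hind : ∀ x ∈ X, ∀ y ∈ X, ¬ A x y) (hX : 1 < X.card)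
    (hO : ∀ x ∈ X, outNbhd A x ⊆ O) (hI : ∀ x ∈ X, inNbhd A x ⊆ I) :
    m ≤ 2 * (O.card + I.card) := by
  obtain ⟨x, hx, y, hy, hxy⟩ := one_lt_card.mp hX
  have := hdeg x y hxy (hind x hx y hy) (hind y hy x hx)
  have := deg_le_of_subset (hO x hx) (hI x hx)
  have := deg_le_of_subset (hO y hy) (hI y hy)
  omega

theorem outNbhd_eq_and_inNbhd_eq_of_tight
    (hdeg : ∀ u v, u ≠ v → ¬ A u v → ¬ A v u → m ≤ deg A u + deg A v)
    (hind : ∀ x ∈ X, ∀ y ∈ X, ¬ A x y) (hX : 1 < X.card)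
    (hO : ∀ x ∈ X, outNbhd A x ⊆ O) (hI : ∀ x ∈ X, inNbhd A x ⊆ I)
    (hm : 2 * (O.card + I.card) ≤ m) : ∀ x ∈ X, outNbhd A x = O ∧ inNbhd A x = I := by
  intro x hx
  obtain ⟨y, hy, hyx⟩ := exists_mem_ne hX x
  have := hdeg x y hyx.symm (hind x hx y hy) (hind y hy x hx)
  have := deg_le_of_subset (hO y hy) (hI y hy)
  exact outNbhd_eq_and_inNbhd_eq_of_le_deg (hO x hx) (hI x hx) (by omega)

end Degrees

theorem IsStrong.exists_arc_leaving {A : V → V → Prop} (h : IsStrong A) {X : Set V} {x y : V}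
    (hx : x ∈ X) (hy : y ∉ X) : ∃ u ∈ X, ∃ v ∉ X, A u v := by
  by_contra! hclosed
  have hreach : ∀ z, Relation.ReflTransGen A x z → z ∈ X := fun z hz => by
    induction hz with
    | refl => exact hx
    | tail _ hbc ih => exact not_not.mp fun hc => hclosed _ ih _ hc hbc
  exact hy (hreach y (h x y))

section OutNeighbourhoods

variable [DecidableEq V] [Fintype V] {A : V → V → Prop} [DecidableRel A]

theorem biUnion_outNbhd (s : Finset V) : s.biUnion (outNbhd A) = outNbrs A s := by
  ext y; simp [outNbrs]

theorem outNbrs_union (s t : Finset V) : outNbrs A (s ∪ t) = outNbrs A s ∪ outNbrs A t := by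
  ext y; simp only [outNbrs, mem_filter, mem_univ, true_and, mem_union]; grind

theorem outNbhd_subset_outNbrs {S : Finset V} {s : V} (hs : s ∈ S) :
    outNbhd A s ⊆ outNbrs A S := fun y hy => by
  simp only [outNbrs, mem_filter, mem_univ, true_and]
  exact ⟨s, hs, mem_outNbhd.mp hy⟩

theorem hasCycleFactor_of_forall_card_le_card_outNbrs (hirr : ∀ v, ¬ A v v)
    (hall : ∀ s : Finset V, s.card ≤ (outNbrs A s).card) : HasCycleFactor A := by
  obtain ⟨f, hinj, hf⟩ := (all_card_le_biUnion_card_iff_exists_injective (outNbhd A)).mp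
    fun s => (biUnion_outNbhd (A := A) s).symm ▸ hall s
  have harc : ∀ v, A v (f v) := fun v => mem_outNbhd.mp (hf v)
  exact hasCycleFactor_of_perm (Equiv.ofBijective f (Finite.injective_iff_bijective.mp hinj)) harc
    fun v hv => hirr v (by convert harc v; exact hv.symm)

end OutNeighbourhoods

namespace IsBipartition

variable [DecidableEq V] [Fintype V] {A : V → V → Prop} {V₁ V₂ S : Finset V} {x y : V}

theorem symm (hbip : IsBipartition A V₁ V₂) : IsBipartition A V₂ V₁ :=
  ⟨hbip.1.symm, union_comm V₁ V₂ ▸ hbip.2.1, hbip.2.2.2, hbip.2.2.1⟩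

theorem mem_or_mem (hbip : IsBipartition A V₁ V₂) (x : V) : x ∈ V₁ ∨ x ∈ V₂ :=
  mem_union.mp (hbip.2.1 ▸ mem_univ x)

theorem ne_of_mem_of_mem (hbip : IsBipartition A V₁ V₂) (hx : x ∈ V₁) (hy : y ∈ V₂) : x ≠ y :=
  fun hxy => disjoint_left.mp hbip.1 hx (hxy ▸ hy)

theorem irrefl (hbip : IsBipartition A V₁ V₂) (x : V) : ¬ A x x :=
  (hbip.mem_or_mem x).elim (fun hx => hbip.2.2.1 x hx x hx) (fun hx => hbip.2.2.2 x hx x hx)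

theorem mem_right_of_adj (hbip : IsBipartition A V₁ V₂) (hx : x ∈ V₁) (hxy : A x y ∨ A y x) :
    y ∈ V₂ :=
  (hbip.mem_or_mem y).resolve_left fun hy => hxy.elim (hbip.2.2.1 x hx y hy) (hbip.2.2.1 y hy x hx)

variable [DecidableRel A]

theorem outNbhd_subset (hbip : IsBipartition A V₁ V₂) (hx : x ∈ V₁) : outNbhd A x ⊆ V₂ :=
  fun _ hy => hbip.mem_right_of_adj hx (.inl (mem_outNbhd.mp hy))

theorem inNbhd_subset (hbip : IsBipartition A V₁ V₂) (hx : x ∈ V₁) : inNbhd A x ⊆ V₂ :=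
  fun _ hy => hbip.mem_right_of_adj hx (.inr (mem_inNbhd.mp hy))

theorem outNbrs_subset (hbip : IsBipartition A V₁ V₂) (hS : S ⊆ V₁) : outNbrs A S ⊆ V₂ := by
  intro y hy
  simp only [outNbrs, mem_filter, mem_univ, true_and] at hy
  obtain ⟨s, hs, hsy⟩ := hy
  exact hbip.mem_right_of_adj (hS hs) (.inl hsy)

theorem inNbhd_subset_sdiff (hbip : IsBipartition A V₁ V₂) (hy : y ∈ V₂ \ outNbrs A S) :
    inNbhd A y ⊆ V₁ \ S := by
  intro x hx
  rw [mem_inNbhd] at hx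
  refine mem_sdiff.mpr ⟨hbip.symm.mem_right_of_adj (mem_sdiff.mp hy).1 (.inr hx), fun hxS => ?_⟩
  exact (mem_sdiff.mp hy).2 (outNbhd_subset_outNbrs hxS (mem_outNbhd.mpr hx))

theorem exists_card_outNbrs_lt (hbip : IsBipartition A V₁ V₂) {s : Finset V}
    (hs : (outNbrs A s).card < s.card) :
    (∃ S ⊆ V₁, (outNbrs A S).card < S.card) ∨ ∃ S ⊆ V₂, (outNbrs A S).card < S.card := by
  by_contra! hall
  have hV₂ : s \ V₁ ⊆ V₂ := fun x hx => (hbip.mem_or_mem x).resolve_left (mem_sdiff.mp hx).2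
  have hunion := card_union_of_disjoint (hbip.1.mono (hbip.symm.outNbrs_subset hV₂)
    (hbip.outNbrs_subset (inter_subset_right (s₁ := s))))
  rw [← outNbrs_union, sdiff_union_inter] at hunion
  have := hall.1 (s ∩ V₁) inter_subset_right
  have := hall.2 (s \ V₁) hV₂
  have := card_inter_add_card_sdiff s V₁
  omega

theorem exists_arc_outNbrs_sdiff (hbip : IsBipartition A V₁ V₂) (hstrong : IsStrong A)
    (hS : S ⊆ V₁) (hx : x ∈ S) (hy : y ∈ V₁ \ S) : ∃ u ∈ outNbrs A S, ∃ v ∈ V₁ \ S, A u v := by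
  have hT := hbip.outNbrs_subset hS
  obtain ⟨hy₁, hyS⟩ := mem_sdiff.mp hy
  have hy' : y ∉ S ∪ outNbrs A S := fun h => (mem_union.mp h).elim hyS
    fun hyT => hbip.ne_of_mem_of_mem hy₁ (hT hyT) rfl
  obtain ⟨u, hu, v, hv, huv⟩ := hstrong.exists_arc_leaving (X := ↑(S ∪ outNbrs A S))
    (mem_union_left _ hx) hy'
  simp only [coe_union, Set.mem_union, mem_coe, not_or] at hu hv
  have huT : u ∈ outNbrs A S :=
    hu.resolve_left fun huS => hv.2 (outNbhd_subset_outNbrs huS (mem_outNbhd.mpr huv))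
  exact ⟨u, huT, v, mem_sdiff.mpr ⟨hbip.symm.mem_right_of_adj (hT huT) (.inl huv), hv.1⟩, huv⟩

theorem deg_eq_degIn (hbip : IsBipartition A V₁ V₂) (hx : x ∈ V₁) : deg A x = degIn A V₂ x :=
  _root_.deg_eq_degIn fun _ hy => hbip.mem_right_of_adj hx hy

theorem le_degIn_add {m : ℕ} (hbip : IsBipartition A V₁ V₂)
    (hdeg : ∀ u v, u ≠ v → ¬ A u v → ¬ A v u → m ≤ deg A u + deg A v)
    (hx : x ∈ V₁) (hy : y ∈ V₁) (hxy : x ≠ y) {X Y : Finset V} (hXY : X ∪ Y = V₂)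
    (hdisj : Disjoint X Y) (hY : ∀ z ∈ Y, A x z ∧ A z x) :
    m ≤ degIn A X x + 2 * Y.card + deg A y := by
  have := hdeg x y hxy (hbip.2.2.1 x hx y hy) (hbip.2.2.1 y hy x hx)
  rwa [hbip.deg_eq_degIn hx, ← hXY, degIn_union hdisj, degIn_eq_two_mul_card hY] at this

end IsBipartition

section Deficient

variable [DecidableEq V] [Fintype V] {A : V → V → Prop} [DecidableRel A] {V₁ V₂ S : Finset V}
  {a : ℕ}

theorem card_eq_of_card_outNbrs_lt (hbip : IsBipartition A V₁ V₂) (h1 : V₁.card = a)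
    (h2 : V₂.card = a) (hstrong : IsStrong A)
    (hdeg : ∀ u v, u ≠ v → ¬ A u v → ¬ A v u → 3 * a - 1 ≤ deg A u + deg A v)
    (hS : S ⊆ V₁) (hdef : (outNbrs A S).card < S.card) :
    1 ≤ (outNbrs A S).card ∧ a = 2 * (outNbrs A S).card + 1 ∧
      S.card = (outNbrs A S).card + 1 := by
  set T := outNbrs A S
  have hT : T ⊆ V₂ := hbip.outNbrs_subset hS
  have hSa : S.card ≤ a := h1 ▸ card_le_card hS
  have hW : (V₂ \ T).card = a - T.card := by rw [card_sdiff_of_subset hT, h2]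
  have hR : (V₁ \ S).card = a - S.card := by rw [card_sdiff_of_subset hS, h1]
  obtain ⟨s, hs⟩ : S.Nonempty := card_pos.mp (by omega)
  obtain ⟨w, hw⟩ : (V₂ \ T).Nonempty := card_pos.mp (by omega)
  have hsw : s ≠ w := hbip.ne_of_mem_of_mem (hS hs) (mem_sdiff.mp hw).1
  have hTpos : 0 < T.card := by
    obtain ⟨_, rfl, v, -, hsv⟩ := hstrong.exists_arc_leaving (X := {s}) rfl hsw.symm
    exact card_pos.mpr ⟨v, outNbhd_subset_outNbrs hs (mem_outNbhd.mpr hsv)⟩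
  have hRpos : 0 < (V₁ \ S).card := by
    obtain ⟨u, -, _, hv, huv⟩ := hstrong.exists_arc_leaving (X := {w}ᶜ) hsw (not_not.mpr rfl)
    rw [Set.notMem_compl_iff, Set.mem_singleton_iff] at hv
    exact card_pos.mpr ⟨u, hbip.inNbhd_subset_sdiff hw (mem_inNbhd.mpr (hv ▸ huv))⟩
  have hSbound := le_two_mul_card_add_card (O := T) hdeg
    (fun x hx y hy => hbip.2.2.1 x (hS hx) y (hS hy)) (by omega)
    (fun _ hx => outNbhd_subset_outNbrs hx) (fun _ hx => hbip.inNbhd_subset (hS hx))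
  have hWbound := le_two_mul_card_add_card (X := V₂ \ T) hdeg
    (fun x hx y hy => hbip.2.2.2 x (mem_sdiff.mp hx).1 y (mem_sdiff.mp hy).1) (by omega)
    (fun _ hx => hbip.symm.outNbhd_subset (mem_sdiff.mp hx).1)
    (fun _ hx => hbip.inNbhd_subset_sdiff hx)
  omega

theorem nbhds_eq_of_card_outNbrs_lt (hbip : IsBipartition A V₁ V₂) (h1 : V₁.card = a)
    (h2 : V₂.card = a) (hstrong : IsStrong A)
    (hdeg : ∀ u v, u ≠ v → ¬ A u v → ¬ A v u → 3 * a - 1 ≤ deg A u + deg A v)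
    (hS : S ⊆ V₁) (hdef : (outNbrs A S).card < S.card) :
    (∀ s ∈ S, outNbhd A s = outNbrs A S ∧ inNbhd A s = V₂) ∧
      ∀ w ∈ V₂ \ outNbrs A S, outNbhd A w = V₁ ∧ inNbhd A w = V₁ \ S := by
  obtain ⟨ht, ha, hSc⟩ := card_eq_of_card_outNbrs_lt hbip h1 h2 hstrong hdeg hS hdef
  have hW := card_sdiff_of_subset (hbip.outNbrs_subset hS)
  have hR := card_sdiff_of_subset hS
  constructor
  · exact outNbhd_eq_and_inNbhd_eq_of_tight hdeg
      (fun x hx y hy => hbip.2.2.1 x (hS hx) y (hS hy)) (by omega)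
      (fun _ hx => outNbhd_subset_outNbrs hx) (fun _ hx => hbip.inNbhd_subset (hS hx)) (by omega)
  · exact outNbhd_eq_and_inNbhd_eq_of_tight hdeg
      (fun x hx y hy => hbip.2.2.2 x (mem_sdiff.mp hx).1 y (mem_sdiff.mp hy).1) (by omega)
      (fun _ hx => hbip.symm.outNbhd_subset (mem_sdiff.mp hx).1)
      (fun _ hx => hbip.inNbhd_subset_sdiff hx) (by omega)

theorem isH1_of_card_outNbrs_lt (hbip : IsBipartition A V₁ V₂) (h1 : V₁.card = a)
    (h2 : V₂.card = a) (hstrong : IsStrong A)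
    (hdeg : ∀ u v, u ≠ v → ¬ A u v → ¬ A v u → 3 * a - 1 ≤ deg A u + deg A v)
    (hS : S ⊆ V₁) (hdef : (outNbrs A S).card < S.card) :
    IsH1 A a S (V₁ \ S) (outNbrs A S) (V₂ \ outNbrs A S) := by
  obtain ⟨ht, ha, hSc⟩ := card_eq_of_card_outNbrs_lt hbip h1 h2 hstrong hdeg hS hdef
  obtain ⟨hSnb, hWnb⟩ := nbhds_eq_of_card_outNbrs_lt hbip h1 h2 hstrong hdeg hS hdef
  have hT := hbip.outNbrs_subset hS
  have hW := card_sdiff_of_subset hT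
  have hR := card_sdiff_of_subset hS
  have hSR : S ∪ V₁ \ S = V₁ := union_sdiff_of_subset hS
  have hTW : outNbrs A S ∪ V₂ \ outNbrs A S = V₂ := union_sdiff_of_subset hT
  have hRW : ∀ r ∈ V₁ \ S, ∀ w ∈ V₂ \ outNbrs A S, A r w ∧ A w r := fun r hr w hw =>
    ⟨mem_inNbhd.mp ((hWnb w hw).2 ▸ hr), mem_outNbhd.mp ((hWnb w hw).1 ▸ (mem_sdiff.mp hr).1)⟩
  have hTS : ∀ u ∈ outNbrs A S, ∀ s ∈ S, A u s ∧ A s u := fun u hu s hs =>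
    ⟨mem_inNbhd.mp ((hSnb s hs).2 ▸ hT hu), mem_outNbhd.mp ((hSnb s hs).1 ▸ hu)⟩
  obtain ⟨s, hs⟩ : S.Nonempty := card_pos.mp (by omega)
  obtain ⟨w, hw⟩ : (V₂ \ outNbrs A S).Nonempty := card_pos.mp (by omega)
  obtain ⟨r, hr⟩ : (V₁ \ S).Nonempty := card_pos.mp (by omega)
  refine ⟨⟨(outNbrs A S).card, ha⟩, by omega, disjoint_sdiff, disjoint_sdiff,
    by rw [hSR, hTW]; exact hbip.1, by rw [hSR, union_assoc, hTW, hbip.2.1],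
    by omega, by omega, by omega, by omega,
    by rw [hSR]; exact hbip.2.2.1, by rw [hTW]; exact hbip.2.2.2, hRW, hTS,
    fun w hw s hs => mem_inNbhd.mp ((hSnb s hs).2 ▸ (mem_sdiff.mp hw).1),
    fun s hs w hw hsw => (mem_sdiff.mp hw).2 ((hSnb s hs).1 ▸ mem_outNbhd.mpr hsw),
    hbip.exists_arc_outNbrs_sdiff hstrong hS hs hr, fun r hr => ?_, fun u hu => ?_⟩
  · have := hbip.le_degIn_add hdeg (mem_sdiff.mp hr).1 (hS hs)
      (fun h => (mem_sdiff.mp hr).2 (h ▸ hs)) hTW disjoint_sdiff (hRW r hr)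
    rw [deg_eq_card_outNbhd_add_card_inNbhd, (hSnb s hs).1, (hSnb s hs).2] at this
    omega
  · have := hbip.symm.le_degIn_add hdeg (hT hu) (mem_sdiff.mp hw).1
      (fun h => (mem_sdiff.mp hw).2 (h ▸ hu)) (sdiff_union_of_subset hS) sdiff_disjoint
      (hTS u hu)
    rw [deg_eq_card_outNbhd_add_card_inNbhd, (hWnb w hw).1, (hWnb w hw).2] at this
    omega

end Deficient

theorem stmt7_general {V : Type*} [DecidableEq V] [Fintype V] (A : V → V → Prop) [DecidableRel A]
    (V₁ V₂ : Finset V) (a : ℕ)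
    (hbip : IsBipartition A V₁ V₂) (h1 : V₁.card = a) (h2 : V₂.card = a)
    (hstrong : IsStrong A)
    (hdeg : ∀ u v, u ≠ v → ¬ A u v → ¬ A v u → 3 * a - 1 ≤ deg A u + deg A v) :
    HasCycleFactor A ∨ (Odd a ∧ ∃ S R U W : Finset V, IsH1 A a S R U W) := by
  by_cases hall : ∀ s : Finset V, s.card ≤ (outNbrs A s).card
  · exact .inl (hasCycleFactor_of_forall_card_le_card_outNbrs hbip.irrefl hall)
  obtain ⟨s, hs⟩ := not_forall.mp hall
  rcases hbip.exists_card_outNbrs_lt (not_le.mp hs) with ⟨S, hS, hdef⟩ | ⟨S, hS, hdef⟩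
  · have hH1 := isH1_of_card_outNbrs_lt hbip h1 h2 hstrong hdeg hS hdef
    exact .inr ⟨hH1.1, _, _, _, _, hH1⟩
  · have hH1 := isH1_of_card_outNbrs_lt hbip.symm h2 h1 hstrong hdeg hS hdef
    exact .inr ⟨hH1.1, _, _, _, _, hH1⟩

theorem stmt7 {V : Type*} [DecidableEq V] [Fintype V] (A : V → V → Prop) [DecidableRel A]
    (V₁ V₂ : Finset V) (a : ℕ) (ha : 2 ≤ a)
    (hbip : IsBipartition A V₁ V₂) (h1 : V₁.card = a) (h2 : V₂.card = a)
    (hstrong : IsStrong A)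
    (hdeg : ∀ u v, u ≠ v → ¬ A u v → ¬ A v u → 3 * a - 1 ≤ deg A u + deg A v) :
    HasCycleFactor A ∨ (Odd a ∧ ∃ S R U W : Finset V, IsH1 A a S R U W) :=
  stmt7_general A V₁ V₂ a hbip h1 h2 hstrong hdeg
end

section
/- In the digraph $H_3$ (for even $a \ge 4$), the size of a maximum matching from $V_1$ to $V_2$ is exactly $a - 2$. -/
/-!
There are no arcs from `S` to `W`, so every arc from `S ∪ R` to `U ∪ W` has its tail in `R` or
its head in `U`: the vertex cover `R ∪ U` bounds every matching by `|R| + |U| = a - 2`.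
Conversely `R` is complete to `W` and `S` to `U`, with `|R| ≤ |W|` and `|U| ≤ |S|`, so matching
`R` into `W` and part of `S` onto `U` gives `a - 2` independent arcs.
-/

open Finset

variable {V : Type*}

namespace IsMatching

variable {A : V → V → Prop} {X Y : Finset V} {M : Finset (V × V)}

theorem injOn_fst (hM : IsMatching A X Y M) : Set.InjOn Prod.fst (M : Set (V × V)) :=
  fun p hp q hq h => by_contra fun hpq => (hM.2 p hp q hq hpq).1 h

theorem injOn_snd (hM : IsMatching A X Y M) : Set.InjOn Prod.snd (M : Set (V × V)) :=
  fun p hp q hq h => by_contra fun hpq => (hM.2 p hp q hq hpq).2 h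

theorem card_le_card_add_card_of_cover [DecidableEq V] (hM : IsMatching A X Y M)
    (C D : Finset V) (hcover : ∀ p ∈ M, p.1 ∈ C ∨ p.2 ∈ D) : #M ≤ #C + #D := by
  have hsplit : M ⊆ M.filter (·.1 ∈ C) ∪ M.filter (·.2 ∈ D) := fun p hp => by
    simpa [hp] using hcover p hp
  have hC : #(M.filter (·.1 ∈ C)) ≤ #C := card_le_card_of_injOn Prod.fst
    (fun p hp => (mem_filter.1 hp).2) (hM.injOn_fst.mono (coe_subset.2 (filter_subset _ _)))
  have hD : #(M.filter (·.2 ∈ D)) ≤ #D := card_le_card_of_injOn Prod.snd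
    (fun p hp => (mem_filter.1 hp).2) (hM.injOn_snd.mono (coe_subset.2 (filter_subset _ _)))
  calc #M ≤ #(M.filter (·.1 ∈ C)) + #(M.filter (·.2 ∈ D)) :=
        (card_le_card hsplit).trans (card_union_le _ _)
    _ ≤ #C + #D := add_le_add hC hD

theorem union [DecidableEq V] {X' Y' : Finset V} {M' : Finset (V × V)}
    (hM : IsMatching A X Y M) (hM' : IsMatching A X' Y' M')
    (hX : Disjoint X X') (hY : Disjoint Y Y') :
    IsMatching A (X ∪ X') (Y ∪ Y') (M ∪ M') := by
  refine ⟨fun p hp => ?_, fun p hp q hq hpq => ?_⟩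
  · rcases mem_union.1 hp with hp | hp
    · obtain ⟨h1, h2, h3⟩ := hM.1 p hp
      exact ⟨mem_union_left _ h1, mem_union_left _ h2, h3⟩
    · obtain ⟨h1, h2, h3⟩ := hM'.1 p hp
      exact ⟨mem_union_right _ h1, mem_union_right _ h2, h3⟩
  · rcases mem_union.1 hp with hp | hp <;> rcases mem_union.1 hq with hq | hq
    · exact hM.2 p hp q hq hpq
    · exact ⟨fun h => disjoint_left.1 hX (hM.1 p hp).1 (h ▸ (hM'.1 q hq).1),
        fun h => disjoint_left.1 hY (hM.1 p hp).2.1 (h ▸ (hM'.1 q hq).2.1)⟩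
    · exact ⟨fun h => disjoint_left.1 hX (hM.1 q hq).1 (h ▸ (hM'.1 p hp).1),
        fun h => disjoint_left.1 hY (hM.1 q hq).2.1 (h ▸ (hM'.1 p hp).2.1)⟩
    · exact hM'.2 p hp q hq hpq

theorem disjoint {X' Y' : Finset V} {M' : Finset (V × V)}
    (hM : IsMatching A X Y M) (hM' : IsMatching A X' Y' M') (hX : Disjoint X X') :
    Disjoint M M' :=
  disjoint_left.2 fun p hp hp' => disjoint_left.1 hX (hM.1 p hp).1 (hM'.1 p hp').1

end IsMatching

theorem exists_isMatching_card_eq_min {A : V → V → Prop} {X Y : Finset V}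
    (hXY : ∀ x ∈ X, ∀ y ∈ Y, A x y) :
    ∃ M, IsMatching A X Y M ∧ #M = min #X #Y := by
  obtain ⟨X', hX', hX'card⟩ := X.exists_subset_card_eq (min_le_left #X #Y)
  obtain ⟨Y', hY', hY'card⟩ := Y.exists_subset_card_eq (min_le_right #X #Y)
  let e : X' ≃ Y' := equivOfCardEq (hX'card.trans hY'card.symm)
  let f : X' ↪ V × V := ⟨fun x => (x, e x), fun x y h => Subtype.ext (Prod.ext_iff.1 h).1⟩
  refine ⟨univ.map f, ⟨?_, ?_⟩, by simp [hX'card]⟩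
  · simp only [mem_map, mem_univ, true_and, forall_exists_index, forall_apply_eq_imp_iff]
    intro x
    exact ⟨hX' x.2, hY' (e x).2, hXY _ (hX' x.2) _ (hY' (e x).2)⟩
  · simp only [mem_map, mem_univ, true_and, forall_exists_index, forall_apply_eq_imp_iff]
    intro x y hxy
    have hxy' : x ≠ y := fun h => hxy (h ▸ rfl)
    exact ⟨fun h => hxy' (Subtype.ext h), fun h => hxy' (e.injective (Subtype.ext h))⟩

namespace IsH3

variable [DecidableEq V] [Fintype V] {A : V → V → Prop} [DecidableRel A] {a : ℕ}
  {S R U W : Finset V}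

theorem card_U_add_card_R (h : IsH3 A a S R U W) : #U + #R = a - 2 := by
  obtain ⟨⟨k, rfl⟩, -, -, -, -, -, -, -, hU, hR, -⟩ := h
  omega

theorem exists_isMatching (h : IsH3 A a S R U W) :
    ∃ M, IsMatching A (S ∪ R) (U ∪ W) M ∧ #M = #U + #R := by
  obtain ⟨-, -, hSR, hUW, -, -, hS, hW, hU, hR, -, -, hRadj, hUadj, -⟩ := h
  obtain ⟨M₁, hM₁, hcard₁⟩ := exists_isMatching_card_eq_min (A := A) (X := S) (Y := U)
    fun s hs u hu => (hUadj u hu s (mem_union_left _ hs)).2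
  obtain ⟨M₂, hM₂, hcard₂⟩ := exists_isMatching_card_eq_min (A := A) (X := R) (Y := W)
    fun r hr w hw => (hRadj r hr w (mem_union_right _ hw)).1
  refine ⟨M₁ ∪ M₂, hM₁.union hM₂ hSR hUW, ?_⟩
  rw [card_union_of_disjoint (hM₁.disjoint hM₂ hSR), hcard₁, hcard₂]
  omega

theorem card_le_of_isMatching (h : IsH3 A a S R U W) {M : Finset (V × V)}
    (hM : IsMatching A (S ∪ R) (U ∪ W) M) : #M ≤ #U + #R := by
  obtain ⟨-, -, -, -, -, -, -, -, -, -, -, -, -, -, -, hSW⟩ := h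
  rw [add_comm]
  refine hM.card_le_card_add_card_of_cover R U fun p hp => ?_
  obtain ⟨hx, hy, hxy⟩ := hM.1 p hp
  rcases mem_union.1 hx with hx | hx
  · exact Or.inr ((mem_union.1 hy).resolve_right fun hy => hSW _ hx _ hy hxy)
  · exact Or.inl hx

end IsH3

theorem stmt17 {V : Type*} [DecidableEq V] [Fintype V] (A : V → V → Prop) [DecidableRel A]
    (a : ℕ) (S R U W : Finset V) (h : IsH3 A a S R U W) :
    (∃ M : Finset (V × V), IsMatching A (S ∪ R) (U ∪ W) M ∧ M.card = a - 2) ∧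
    (∀ M : Finset (V × V), IsMatching A (S ∪ R) (U ∪ W) M → M.card ≤ a - 2) := by
  rw [← h.card_U_add_card_R]
  exact ⟨h.exists_isMatching, fun M hM => h.card_le_of_isMatching hM⟩
end
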